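/- arXiv:2408.00449 — 3 statements merged into one kernel-verified Lean document; each statement's English description precedes it below -/
import Mathlib

section
/- Let w ∈ ℝ^n be a vector whose coordinates are linearly independent over ℚ. Let L_σ and L_τ be linear subspaces of ℝ^n defined over ℚ (i.e., spanned by rational vectors). If there exist points p ∈ L_σ and q ∈ L_τ with p + q = w (equivalently w ∈ L_σ + L_τ), and moreover L_σ and w - L_τ both contain a common point, then L_σ + L_τ = ℝ^n. -/
/-!
If a subspace spanned by rational vectors is proper, its rational points span a proper
`ℚ`-subspace of `ℚ^n`, which is killed by a nonzero rational linear form `q`. Then `q` kills the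
whole real span too, so a vector in it satisfies the nontrivial rational relation
`∑ qᵢ wᵢ = 0`. Hence a rational subspace containing a vector with `ℚ`-independent coordinates is
all of `ℝ^n`; apply this to `Lσ ⊔ Lτ`, which is rational and contains `w = p + q`.
-/

/-- A linear subspace of `ℝ^n` is defined over `ℚ` if it is spanned by
vectors with rational coordinates. -/
def IsRationalSubspace {n : ℕ} (L : Submodule ℝ (Fin n → ℝ)) : Prop :=
  ∃ S : Set (Fin n → ℚ), L = Submodule.span ℝ ((fun q : Fin n → ℚ => fun i => (q i : ℝ)) '' S)

open Matrix

theorem IsRationalSubspace.sup {n : ℕ} {L M : Submodule ℝ (Fin n → ℝ)}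
    (hL : IsRationalSubspace L) (hM : IsRationalSubspace M) : IsRationalSubspace (L ⊔ M) := by
  obtain ⟨S, rfl⟩ := hL
  obtain ⟨T, rfl⟩ := hM
  exact ⟨S ∪ T, by rw [Set.image_union, Submodule.span_union]⟩

theorem span_ratCast_image_eq_top {n : ℕ} {S : Set (Fin n → ℚ)}
    (hS : Submodule.span ℚ S = ⊤) :
    Submodule.span ℝ ((fun q : Fin n → ℚ => fun i => (q i : ℝ)) '' S) = ⊤ := by
  set f : (Fin n → ℚ) →ₗ[ℚ] (Fin n → ℝ) := (Algebra.linearMap ℚ ℝ).compLeft (Fin n)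
  have hspan : Submodule.span ℝ (f '' S) = Submodule.span ℝ (Set.range f) := by
    rw [← Submodule.span_span_of_tower ℚ ℝ (f '' S), Submodule.span_image, hS,
      Submodule.map_top, LinearMap.coe_range]
  have hbasis : Set.range (Pi.basisFun ℝ (Fin n)) ⊆ Set.range f := by
    rintro _ ⟨i, rfl⟩
    exact ⟨Pi.single i 1, by ext j; simp [f, Pi.single_apply, apply_ite]⟩
  rw [eq_top_iff, ← (Pi.basisFun ℝ (Fin n)).span_eq]
  exact hspan ▸ Submodule.span_mono hbasis

theorem exists_ne_zero_forall_dotProduct_eq_zero {K ι : Type*} [Field K] [Fintype ι]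
    [DecidableEq ι] {S : Set (ι → K)} (hS : Submodule.span K S ≠ ⊤) :
    ∃ q : ι → K, q ≠ 0 ∧ ∀ s ∈ S, q ⬝ᵥ s = 0 := by
  obtain ⟨φ, hφ, hφS⟩ := Submodule.exists_dual_map_eq_bot_of_lt_top hS.lt_top inferInstance
  refine ⟨(dotProductEquiv K ι).symm φ, by simpa using hφ, fun s hs => ?_⟩
  have hφs : φ s = 0 :=
    (Submodule.mem_bot K).1 (hφS ▸ Submodule.mem_map_of_mem (Submodule.subset_span hs))
  rw [← hφs, ← dotProductEquiv_apply_apply, LinearEquiv.apply_symm_apply]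

theorem ratCast_dotProduct_eq_zero_of_mem_span {ι : Type*} [Fintype ι] [DecidableEq ι]
    {q : ι → ℚ} {S : Set (ι → ℚ)} (hq : ∀ s ∈ S, q ⬝ᵥ s = 0) {x : ι → ℝ}
    (hx : x ∈ Submodule.span ℝ ((fun s : ι → ℚ => fun i => (s i : ℝ)) '' S)) :
    (fun i => (q i : ℝ)) ⬝ᵥ x = 0 := by
  suffices Submodule.span ℝ ((fun s : ι → ℚ => fun i => (s i : ℝ)) '' S) ≤
      LinearMap.ker (dotProductEquiv ℝ ι fun i => (q i : ℝ)) from this hx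
  rw [Submodule.span_le]
  rintro _ ⟨s, hs, rfl⟩
  simpa [dotProduct] using congrArg (Rat.cast : ℚ → ℝ) (hq s hs)

theorem IsRationalSubspace.eq_top_of_mem {n : ℕ} {L : Submodule ℝ (Fin n → ℝ)}
    (hL : IsRationalSubspace L) {w : Fin n → ℝ}
    (hw : ∀ q : Fin n → ℚ, (∑ i, (q i : ℝ) * w i) = 0 → q = 0) (hwL : w ∈ L) : L = ⊤ := by
  obtain ⟨S, rfl⟩ := hL
  refine span_ratCast_image_eq_top (not_not.1 fun hS => ?_)
  obtain ⟨q, hq, hqS⟩ := exists_ne_zero_forall_dotProduct_eq_zero hS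
  exact hq (hw q (ratCast_dotProduct_eq_zero_of_mem_span hqS hwL))

theorem stmt_1_general (n : ℕ) (w : Fin n → ℝ)
    (hw : ∀ q : Fin n → ℚ, (∑ i, (q i : ℝ) * w i) = 0 → q = 0)
    (Lσ Lτ : Submodule ℝ (Fin n → ℝ))
    (hLσ : IsRationalSubspace Lσ) (hLτ : IsRationalSubspace Lτ)
    (p q : Fin n → ℝ) (hp : p ∈ Lσ) (hq : q ∈ Lτ) (hpq : p + q = w) :
    Lσ ⊔ Lτ = ⊤ :=
  (hLσ.sup hLτ).eq_top_of_mem hw (hpq ▸ Submodule.add_mem_sup hp hq)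

theorem stmt_1 (n : ℕ) (w : Fin n → ℝ)
    (hw : ∀ q : Fin n → ℚ, (∑ i, (q i : ℝ) * w i) = 0 → q = 0)
    (Lσ Lτ : Submodule ℝ (Fin n → ℝ))
    (hLσ : IsRationalSubspace Lσ) (hLτ : IsRationalSubspace Lτ)
    (p q : Fin n → ℝ) (hp : p ∈ Lσ) (hq : q ∈ Lτ) (hpq : p + q = w)
    (hcommon : ∃ z : Fin n → ℝ, z ∈ Lσ ∧ w - z ∈ Lτ) :
    Lσ ⊔ Lτ = ⊤ :=
  stmt_1_general n w hw Lσ Lτ hLσ hLτ p q hp hq hpq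
end

section
/- Let H be a finite simple graph with |E(H)| = 2|V(H)| - 2 that is rigid but not redundantly rigid (i.e., there is an edge e such that H - e is not rigid). Then H has a proper subgraph H₁ that is rigid and satisfies |E(H₁)| = 2|V(H₁)| - 2. -/
/-!
Let `B` be a spanning minimally rigid subgraph of `H`. Counting edges, `H` has exactly one edge
`uv` outside `B`. By submodularity of the edge count, the tight subgraphs of `B` (those meeting
the Laman bound) that contain `u` and `v` are closed under intersection, so there is a least one,
`A`. If `A` contained an edge `e`, exchanging `e` for `uv` in `B` would again give a Laman graph:
a subgraph violating the bound after the exchange would come from a tight subgraph through `u`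
and `v` avoiding `e`, which is impossible since it contains `A`. So the edge `e` whose removal
destroys rigidity is neither `uv` nor in `A`, and `H₁ = A + uv` is the required proper subgraph.
-/

/-- A subgraph `A` of `H` is minimally rigid in the Geiringer–Laman counting sense:
`|E(A)| = 2|V(A)| - 3` and every subgraph `B ≤ A` with at least two vertices
satisfies `|E(B)| ≤ 2|V(B)| - 3`. -/
def SubMinRigid {V : Type*} {H : SimpleGraph V} (A : H.Subgraph) : Prop :=
  A.edgeSet.ncard = 2 * A.verts.ncard - 3 ∧
    ∀ B : H.Subgraph, B ≤ A → 2 ≤ B.verts.ncard →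
      B.edgeSet.ncard ≤ 2 * B.verts.ncard - 3

/-- A subgraph is rigid if it contains a spanning minimally rigid subgraph. -/
def SubRigid {V : Type*} {H : SimpleGraph V} (A : H.Subgraph) : Prop :=
  ∃ B : H.Subgraph, B ≤ A ∧ B.verts = A.verts ∧ SubMinRigid B

namespace SimpleGraph.Subgraph

variable {V : Type*} {G : SimpleGraph V} {u v : V}

lemma le_of_verts_subset_of_edgeSet_subset {A C : G.Subgraph} (hv : A.verts ⊆ C.verts)
    (he : A.edgeSet ⊆ C.edgeSet) : A ≤ C :=
  ⟨hv, fun _ _ hab => Subgraph.mem_edgeSet.mp (he (Subgraph.mem_edgeSet.mpr hab))⟩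

lemma edgeSet_deleteEdges (A : G.Subgraph) (s : Set (Sym2 V)) :
    (A.deleteEdges s).edgeSet = A.edgeSet \ s := by
  ext x
  induction x using Sym2.ind
  simp [deleteEdges_adj]

lemma verts_sup_subgraphOfAdj {A : G.Subgraph} (h : G.Adj u v) (hu : u ∈ A.verts)
    (hv : v ∈ A.verts) : (A ⊔ G.subgraphOfAdj h).verts = A.verts := by
  simp [hu, hv]

lemma edgeSet_sup_subgraphOfAdj (A : G.Subgraph) (h : G.Adj u v) :
    (A ⊔ G.subgraphOfAdj h).edgeSet = insert s(u, v) A.edgeSet := by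
  rw [edgeSet_sup, edgeSet_subgraphOfAdj, Set.union_singleton]

lemma two_le_ncard_verts [Finite V] {A : G.Subgraph} (hu : u ∈ A.verts) (hv : v ∈ A.verts)
    (huv : u ≠ v) : 2 ≤ A.verts.ncard :=
  (Set.one_lt_ncard).mpr ⟨u, hu, v, hv, huv⟩

end SimpleGraph.Subgraph

open SimpleGraph.Subgraph

section

variable {V : Type*} {G : SimpleGraph V} {u v : V}

/-- `|E(A)| = 2|V(A)| - 3`, with the `3` moved to the left to avoid truncated subtraction. -/
def IsTight (A : G.Subgraph) : Prop :=
  A.edgeSet.ncard + 3 = 2 * A.verts.ncard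

def tightThrough (B : G.Subgraph) (u v : V) : Set G.Subgraph :=
  {A | A ≤ B ∧ u ∈ A.verts ∧ v ∈ A.verts ∧ IsTight A}

namespace SubMinRigid

variable {A B C : G.Subgraph}

lemma ncard_edgeSet_add_three_le (hB : SubMinRigid B) (hC : C ≤ B)
    (h2 : 2 ≤ C.verts.ncard) : C.edgeSet.ncard + 3 ≤ 2 * C.verts.ncard := by
  have := hB.2 C hC h2
  omega

lemma isTight (hB : SubMinRigid B) (h2 : 2 ≤ B.verts.ncard) : IsTight B := by
  unfold IsTight
  have := hB.1
  omega

lemma of_le_of_isTight (hB : SubMinRigid B) (hA : A ≤ B) (hAt : IsTight A) : SubMinRigid A :=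
  ⟨by unfold IsTight at hAt; omega, fun C hC => hB.2 C (hC.trans hA)⟩

lemma subRigid_top_deleteEdges {e : Sym2 V} (hB : SubMinRigid B) (hverts : B.verts = Set.univ)
    (he : e ∉ B.edgeSet) : SubRigid ((⊤ : G.Subgraph).deleteEdges {e}) := by
  refine ⟨B, le_of_verts_subset_of_edgeSet_subset ?_ ?_, by simp [hverts], hB⟩
  · simp [hverts]
  · rw [edgeSet_deleteEdges, edgeSet_top]
    exact fun x hx => ⟨B.edgeSet_subset hx, by rintro rfl; exact he hx⟩

lemma subRigid_sup_subgraphOfAdj (hB : SubMinRigid B) (hA : A ∈ tightThrough B u v)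
    (huv : G.Adj u v) : SubRigid (A ⊔ G.subgraphOfAdj huv) :=
  ⟨A, le_sup_left, (verts_sup_subgraphOfAdj huv hA.2.1 hA.2.2.1).symm,
    hB.of_le_of_isTight hA.1 hA.2.2.2⟩

variable [Finite V]

/-- Submodularity of the edge count, with the Laman bound applied to `A₁ ⊔ A₂` and `A₁ ⊓ A₂`. -/
lemma isTight_inf (hB : SubMinRigid B) {A₁ A₂ : G.Subgraph} (h₁ : A₁ ∈ tightThrough B u v)
    (h₂ : A₂ ∈ tightThrough B u v) (huv : u ≠ v) : IsTight (A₁ ⊓ A₂) := by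
  obtain ⟨h₁B, h₁u, h₁v, h₁t⟩ := h₁
  obtain ⟨h₂B, h₂u, h₂v, h₂t⟩ := h₂
  have hsup := hB.ncard_edgeSet_add_three_le (sup_le h₁B h₂B)
    (two_le_ncard_verts (Or.inl h₁u) (Or.inl h₁v) huv)
  have hinf := hB.ncard_edgeSet_add_three_le (inf_le_left.trans h₁B)
    (two_le_ncard_verts ⟨h₁u, h₂u⟩ ⟨h₁v, h₂v⟩ huv)
  have hV := Set.ncard_union_add_ncard_inter A₁.verts A₂.verts
  have hE := Set.ncard_union_add_ncard_inter A₁.edgeSet A₂.edgeSet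
  rw [verts_sup, edgeSet_sup] at hsup
  rw [verts_inf, edgeSet_inf] at hinf
  unfold IsTight at h₁t h₂t ⊢
  rw [verts_inf, edgeSet_inf]
  omega

lemma inf_mem_tightThrough (hB : SubMinRigid B) {A₁ A₂ : G.Subgraph}
    (h₁ : A₁ ∈ tightThrough B u v) (h₂ : A₂ ∈ tightThrough B u v) (huv : u ≠ v) :
    A₁ ⊓ A₂ ∈ tightThrough B u v :=
  ⟨inf_le_left.trans h₁.1, ⟨h₁.2.1, h₂.2.1⟩, ⟨h₁.2.2.1, h₂.2.2.1⟩, hB.isTight_inf h₁ h₂ huv⟩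

lemma exists_isLeast_tightThrough (hB : SubMinRigid B) (hu : u ∈ B.verts) (hv : v ∈ B.verts)
    (huv : u ≠ v) : ∃ A, IsLeast (tightThrough B u v) A := by
  have hBmem : B ∈ tightThrough B u v :=
    ⟨le_rfl, hu, hv, hB.isTight (two_le_ncard_verts hu hv huv)⟩
  obtain ⟨A, hAmem, hAmin⟩ := (Set.toFinite (tightThrough B u v)).exists_minimal ⟨B, hBmem⟩
  refine ⟨A, hAmem, fun C hC => ?_⟩
  have hAC := hB.inf_mem_tightThrough hAmem hC huv
  exact (hAmin hAC inf_le_left).trans inf_le_right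

lemma exchange (hB : SubMinRigid B) (huv : G.Adj u v) (huvB : s(u, v) ∉ B.edgeSet)
    (hA : IsLeast (tightThrough B u v) A) {e : Sym2 V} (heA : e ∈ A.edgeSet) :
    SubMinRigid (B.deleteEdges {e} ⊔ G.subgraphOfAdj huv) := by
  obtain ⟨⟨hAB, hAu, hAv, -⟩, hAleast⟩ := hA
  have heB : e ∈ B.edgeSet := edgeSet_mono hAB heA
  have hverts : (B.deleteEdges {e} ⊔ G.subgraphOfAdj huv).verts = B.verts :=
    verts_sup_subgraphOfAdj huv (hAB.1 hAu) (hAB.1 hAv)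
  have hedges := edgeSet_sup_subgraphOfAdj (B.deleteEdges {e}) huv
  rw [edgeSet_deleteEdges] at hedges
  refine ⟨?_, fun C hC h2 => ?_⟩
  · rw [hverts, hedges, Set.ncard_insert_of_notMem (fun h => huvB h.1),
      Set.ncard_sdiff_singleton_add_one heB]
    exact hB.1
  have hCE : C.edgeSet ⊆ insert s(u, v) (B.edgeSet \ {e}) := hedges ▸ edgeSet_mono hC
  set C' := C.deleteEdges {s(u, v)}
  have hC'B : C' ≤ B := by
    refine le_of_verts_subset_of_edgeSet_subset (hverts ▸ hC.1) ?_
    rw [edgeSet_deleteEdges]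
    rintro x ⟨hxC, hxuv⟩
    exact ((hCE hxC).resolve_left hxuv).1
  have hC' := hB.2 C' hC'B h2
  rw [edgeSet_deleteEdges, deleteEdges_verts] at hC'
  by_cases huvC : s(u, v) ∈ C.edgeSet
  · have hu : u ∈ C.verts := C.edge_vert (SimpleGraph.Subgraph.mem_edgeSet.mp huvC)
    have hv : v ∈ C.verts := C.edge_vert (SimpleGraph.Subgraph.mem_edgeSet.mp huvC).symm
    -- `C'` avoids `e`, so it cannot lie above `A`; hence it is not tight.
    have hnotTight : ¬ IsTight C' := by
      intro hC't
      have heC' : e ∈ C'.edgeSet := edgeSet_mono (hAleast ⟨hC'B, hu, hv, hC't⟩) heA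
      rw [edgeSet_deleteEdges] at heC'
      obtain ⟨heC, heuv⟩ := heC'
      exact ((hCE heC).resolve_left heuv).2 rfl
    unfold IsTight at hnotTight
    rw [edgeSet_deleteEdges, deleteEdges_verts] at hnotTight
    have := Set.ncard_sdiff_singleton_add_one huvC
    omega
  · rwa [Set.sdiff_singleton_eq_self huvC] at hC'

end SubMinRigid

lemma ncard_edgeSet_sup_subgraphOfAdj [Finite V] {A B : G.Subgraph}
    (hA : A ∈ tightThrough B u v) (huv : G.Adj u v)
    (huvB : s(u, v) ∉ B.edgeSet) :
    (A ⊔ G.subgraphOfAdj huv).edgeSet.ncard = 2 * (A ⊔ G.subgraphOfAdj huv).verts.ncard - 2 := by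
  obtain ⟨hAB, hAu, hAv, hAt⟩ := hA
  rw [verts_sup_subgraphOfAdj huv hAu hAv, edgeSet_sup_subgraphOfAdj,
    Set.ncard_insert_of_notMem (fun h => huvB (edgeSet_mono hAB h))]
  unfold IsTight at hAt
  omega

end

theorem stmt_9 (V : Type*) [Fintype V] (H : SimpleGraph V)
    (hcount : H.edgeSet.ncard = 2 * Fintype.card V - 2)
    (hrigid : SubRigid (⊤ : H.Subgraph))
    (hnotred : ∃ e ∈ H.edgeSet, ¬ SubRigid ((⊤ : H.Subgraph).deleteEdges {e})) :
    ∃ H₁ : H.Subgraph, H₁ ≠ ⊤ ∧ SubRigid H₁ ∧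
      H₁.edgeSet.ncard = 2 * H₁.verts.ncard - 2 := by
  obtain ⟨e, heH, hnot⟩ := hnotred
  obtain ⟨B, -, hBverts, hB⟩ := hrigid
  rw [verts_top] at hBverts
  have hBcard : B.verts.ncard = Fintype.card V := by
    rw [hBverts, Set.ncard_univ, Nat.card_eq_fintype_card]
  have hHpos : 0 < H.edgeSet.ncard := (Set.ncard_pos).mpr ⟨e, heH⟩
  obtain ⟨x, hxH, hxB⟩ := Set.exists_mem_notMem_of_ncard_lt_ncard
    (s := B.edgeSet) (t := H.edgeSet) (by have := hB.1; omega)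
  obtain ⟨u, v⟩ := x
  have huv : H.Adj u v := hxH
  have hu : u ∈ B.verts := hBverts ▸ Set.mem_univ u
  have hv : v ∈ B.verts := hBverts ▸ Set.mem_univ v
  have heuv : e ≠ s(u, v) := by
    rintro rfl
    exact hnot (hB.subRigid_top_deleteEdges hBverts hxB)
  obtain ⟨A, hA⟩ := hB.exists_isLeast_tightThrough hu hv huv.ne
  have heA : e ∉ A.edgeSet := by
    intro heA
    refine hnot ((hB.exchange huv hxB hA heA).subRigid_top_deleteEdges ?_ ?_)
    · rw [verts_sup_subgraphOfAdj huv (by simpa using hu) (by simpa using hv), deleteEdges_verts,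
        hBverts]
    · rw [edgeSet_sup_subgraphOfAdj, edgeSet_deleteEdges]
      rintro (h | ⟨-, h⟩)
      exacts [heuv h, h rfl]
  refine ⟨A ⊔ H.subgraphOfAdj huv, fun htop => ?_, hB.subRigid_sup_subgraphOfAdj hA.1 huv,
    ncard_edgeSet_sup_subgraphOfAdj hA.1 huv hxB⟩
  have he : e ∈ (A ⊔ H.subgraphOfAdj huv).edgeSet := by rwa [htop, edgeSet_top]
  rw [edgeSet_sup_subgraphOfAdj] at he
  exact he.elim heuv heA
end

section
/- Let X ⊆ ℝ^n be a set that is a finite union of rational polyhedral cones (so 0 ∈ closure of each face and each face's affine span is a linear subspace defined over ℚ), and let w ∈ ℝ^n have ℚ-linearly independent coordinates. Define Y = {w - x : x ∈ X}. If p ∈ X ∩ Y, with p in a cone σ of X spanning the rational subspace L_σ and w - p in a cone τ' of X spanning the rational subspace L_{τ'}, then L_σ + L_{τ'} = ℝ^n. -/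
private lemma rational_span_top {n : ℕ} (w : Fin n → ℝ)
    (hw : ∀ q : Fin n → ℚ, (∑ i, (q i : ℝ) * w i) = 0 → q = 0)
    (L : Submodule ℝ (Fin n → ℝ)) (hL : IsRationalSubspace L) (hwL : w ∈ L) :
    L = ⊤ := by
  obtain ⟨S, hS⟩ := hL
  set c : (Fin n → ℚ) → (Fin n → ℝ) := fun q => fun i => (q i : ℝ) with hc
  by_cases hV : Submodule.span ℚ S = ⊤
  · -- every rational vector's image is in L, in particular the standard basis
    have himg : ∀ v : Fin n → ℚ, c v ∈ L := by
      intro v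
      have hv : v ∈ Submodule.span ℚ S := hV ▸ Submodule.mem_top
      induction hv using Submodule.span_induction with
      | mem x hx => exact hS ▸ Submodule.subset_span ⟨x, hx, rfl⟩
      | zero =>
          have : c 0 = 0 := by funext i; simp [hc]
          rw [this]; exact L.zero_mem
      | add x y hx hy ihx ihy =>
          have : c (x + y) = c x + c y := by funext i; simp [hc]
          rw [this]; exact L.add_mem ihx ihy
      | smul a x hx ih =>
          have : c (a • x) = (a : ℝ) • c x := by
            funext i; simp [hc, Rat.cast_mul]
          rw [this]; exact L.smul_mem _ ih
    rw [eq_top_iff]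
    intro x _
    have hx : x = ∑ i, x i • (Pi.single i (1 : ℝ) : Fin n → ℝ) := by
      funext j
      simp [Pi.single_apply, Finset.sum_apply]
    rw [hx]
    refine Submodule.sum_mem _ fun i _ => L.smul_mem _ ?_
    have : (Pi.single i (1 : ℝ)) = c (Pi.single i (1 : ℚ)) := by
      funext j
      by_cases h : j = i <;> simp [hc, Pi.single_apply, h]
    rw [this]; exact himg _
  · exfalso
    obtain ⟨f, hf, hker⟩ := Submodule.exists_dual_map_eq_bot_of_lt_top
      (lt_top_iff_ne_top.mpr hV) inferInstance
    set q : Fin n → ℚ := fun i => f (Pi.single i 1) with hq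
    have hfval : ∀ v : Fin n → ℚ, f v = ∑ i, q i * v i := by
      intro v
      have hv : v = ∑ i, v i • (Pi.single i (1 : ℚ) : Fin n → ℚ) := by
        funext j
        simp [Pi.single_apply, Finset.sum_apply]
      calc f v = f (∑ i, v i • (Pi.single i (1 : ℚ) : Fin n → ℚ)) := by rw [← hv]
        _ = ∑ i, v i * q i := by rw [map_sum]; simp [hq, smul_eq_mul]
        _ = ∑ i, q i * v i := by simp [mul_comm]
    have hfS : ∀ s ∈ S, f s = 0 := by
      intro s hs
      have : f s ∈ Submodule.map f (Submodule.span ℚ S) :=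
        ⟨s, Submodule.subset_span hs, rfl⟩
      rw [hker] at this
      exact this
    -- the corresponding real functional vanishes on L
    have hP : ∀ x ∈ L, (∑ i, (q i : ℝ) * x i) = 0 := by
      intro x hx
      rw [hS] at hx
      induction hx using Submodule.span_induction with
      | mem x hx =>
          obtain ⟨s, hs, rfl⟩ := hx
          have : (∑ i, (q i : ℝ) * (s i : ℝ)) = ((∑ i, q i * s i : ℚ) : ℝ) := by
            push_cast; ring_nf
          rw [this, ← hfval s, hfS s hs, Rat.cast_zero]
      | zero => simp
      | add x y hx hy ihx ihy =>
          simp only [Pi.add_apply, mul_add, Finset.sum_add_distrib, ihx, ihy, add_zero]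
      | smul a x hx ih =>
          simp only [Pi.smul_apply, smul_eq_mul]
          rw [Finset.sum_congr rfl (fun i _ => by ring_nf : ∀ i ∈ Finset.univ,
            (q i : ℝ) * (a * x i) = a * ((q i : ℝ) * x i)), ← Finset.mul_sum, ih, mul_zero]
    have hq0 : q = 0 := hw q (hP w hwL)
    refine hf (LinearMap.ext fun v => ?_)
    rw [hfval v, hq0]
    simp

theorem stmt_13 (n : ℕ) (w : Fin n → ℝ)
    (hw : ∀ q : Fin n → ℚ, (∑ i, (q i : ℝ) * w i) = 0 → q = 0)
    (X : Set (Fin n → ℝ)) (Y : Set (Fin n → ℝ)) (hY : Y = (fun x => w - x) '' X)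
    (p : Fin n → ℝ) (hp : p ∈ X ∩ Y)
    (σ τ' : Set (Fin n → ℝ)) (hσX : σ ⊆ X) (hτX : τ' ⊆ X)
    (hpσ : p ∈ σ) (hwpτ : w - p ∈ τ')
    (Lσ Lτ' : Submodule ℝ (Fin n → ℝ))
    (hLσ : Lσ = Submodule.span ℝ σ) (hLτ' : Lτ' = Submodule.span ℝ τ')
    (hQσ : IsRationalSubspace Lσ) (hQτ' : IsRationalSubspace Lτ') :
    Lσ ⊔ Lτ' = ⊤ := by
  have hwmem : w ∈ Lσ ⊔ Lτ' := by
    have h1 : p ∈ Lσ := hLσ ▸ Submodule.subset_span hpσ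
    have h2 : w - p ∈ Lτ' := hLτ' ▸ Submodule.subset_span hwpτ
    have : w = p + (w - p) := by ring
    rw [this]
    exact Submodule.add_mem _ (Submodule.mem_sup_left h1) (Submodule.mem_sup_right h2)
  obtain ⟨Sσ, hSσ⟩ := hQσ
  obtain ⟨Sτ, hSτ⟩ := hQτ'
  refine rational_span_top w hw _ ⟨Sσ ∪ Sτ, ?_⟩ hwmem
  rw [Set.image_union, Submodule.span_union, hSσ, hSτ]
end
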